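/- arXiv:2504.17154 — 5 statements merged into one kernel-verified Lean document; each statement's English description precedes it below -/
import Mathlib

section
/- Suppose the primal problem min f₀(x) subject to f₁(x) ≤ 0 is strictly feasible, i.e., there exists x₀ with f₁(x₀) < 0. Then the dual function g(η) = inf_x (f₀(x) + η f₁(x)) attains its supremum over η ≥ 0 at some finite η* ∈ [0, ∞). -/
/-!
The dual function is an infimum of affine functions of `η`, hence upper semicontinuous, and
strict feasibility at `x₀` gives `g η ≤ f₀ x₀ + η f₁ x₀ → ⊥` as `η → ∞`. An upper semicontinuous
function tending to `⊥` attains its maximum on `[0, ∞)`: unless it is `⊥` there, pick `b` with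
`g b > ⊥`; the superlevel set `{η ≥ 0 | g b ≤ g η}` is closed and bounded, so `g` attains its
maximum on it by Weierstrass, and that maximum is global.
-/

open Set Filter Topology

theorem UpperSemicontinuousOn.exists_isMaxOn_of_isCompact_superlevel {α β : Type*}
    [TopologicalSpace α] [LinearOrder β] {f : α → β} {s : Set α} {a : α} (ha : a ∈ s)
    (hf : UpperSemicontinuousOn f s) (hK : IsCompact {x ∈ s | f a ≤ f x}) :
    ∃ x ∈ s, IsMaxOn f s x := by
  obtain ⟨x, ⟨hxs, hax⟩, hmax⟩ :=
    (hf.mono fun _ hy ↦ hy.1).exists_isMaxOn (s := {x ∈ s | f a ≤ f x}) ⟨a, ha, le_rfl⟩ hK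
  refine ⟨x, hxs, fun y hys ↦ ?_⟩
  rcases le_or_gt (f a) (f y) with hay | hya
  · exact hmax ⟨hys, hay⟩
  · exact hya.le.trans hax

theorem UpperSemicontinuous.exists_isMaxOn_Ici {α β : Type*} [LinearOrder α]
    [TopologicalSpace α] [ClosedIciTopology α] [CompactIccSpace α] [LinearOrder β] [OrderBot β]
    [TopologicalSpace β] [OrderTopology β] {g : α → β} (hg : UpperSemicontinuous g)
    (hlim : Tendsto g atTop (𝓝 ⊥)) (a : α) : ∃ η ∈ Ici a, IsMaxOn g (Ici a) η := by
  by_cases hbot : ∀ η ∈ Ici a, g η = ⊥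
  · exact ⟨a, self_mem_Ici, fun η hη ↦ by simp [hbot η hη]⟩
  push Not at hbot
  obtain ⟨b, hb, hgb⟩ := hbot
  have : Nonempty α := ⟨a⟩
  obtain ⟨M, hM⟩ := eventually_atTop.1 (hlim.eventually_lt_const (bot_lt_iff_ne_bot.2 hgb))
  refine (hg.upperSemicontinuousOn _).exists_isMaxOn_of_isCompact_superlevel hb
    ((isCompact_Icc (a := a) (b := M)).of_isClosed_subset
      (isClosed_Ici.inter (hg.isClosed_preimage (g b))) fun η ⟨hη, hbη⟩ ↦ ⟨hη, ?_⟩)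
  by_contra! hMη
  exact (hM η hMη.le).not_ge hbη

section DualFunction

variable {X : Type*} (f₀ f₁ : X → ℝ)

noncomputable def dualFunction (η : ℝ) : EReal :=
  ⨅ x : X, ((f₀ x + η * f₁ x : ℝ) : EReal)

theorem upperSemicontinuous_dualFunction : UpperSemicontinuous (dualFunction f₀ f₁) :=
  upperSemicontinuous_iInf fun _ ↦
    (continuous_coe_real_ereal.comp (by fun_prop)).upperSemicontinuous

theorem tendsto_dualFunction_atTop {x₀ : X} (hx₀ : f₁ x₀ < 0) :
    Tendsto (dualFunction f₀ f₁) atTop (𝓝 ⊥) := by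
  have haffine : Tendsto (fun η : ℝ ↦ f₀ x₀ + η * f₁ x₀) atTop atBot :=
    tendsto_atBot_add_const_left _ _ (tendsto_id.atTop_mul_const_of_neg hx₀)
  exact tendsto_nhds_bot_mono (EReal.tendsto_coe_nhds_bot_iff.2 haffine)
    (.of_forall fun _ ↦ iInf_le _ x₀)

end DualFunction

theorem dual_optimum_attained_general
    {X : Type*} (f₀ f₁ : X → ℝ)
    (hstrict : ∃ x₀ : X, f₁ x₀ < 0)
    (g : ℝ → EReal)
    (hg : ∀ η, g η = ⨅ x : X, ((f₀ x + η * f₁ x : ℝ) : EReal)) :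
    ∃ ηstar : ℝ, 0 ≤ ηstar ∧ ∀ η : ℝ, 0 ≤ η → g η ≤ g ηstar := by
  obtain rfl : g = dualFunction f₀ f₁ := funext hg
  obtain ⟨x₀, hx₀⟩ := hstrict
  obtain ⟨ηstar, hηstar, hmax⟩ := (upperSemicontinuous_dualFunction f₀ f₁).exists_isMaxOn_Ici
    (tendsto_dualFunction_atTop f₀ f₁ hx₀) 0
  exact ⟨ηstar, hηstar, fun _ hη ↦ hmax hη⟩

/-- If the primal problem `min f₀(x) s.t. f₁(x) ≤ 0` is strictly
feasible (there is `x₀` with `f₁ x₀ < 0`) and `inf f₀ > -∞`, then the dual function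
`g(η) = ⨅ x, (f₀ x + η f₁ x)` (valued in `EReal`) attains its supremum over `η ≥ 0`
at some finite `η* ∈ [0, ∞)`. -/
theorem dual_optimum_attained
    {X : Type*} (f₀ f₁ : X → ℝ)
    (hbdd : BddBelow (Set.range f₀))
    (hstrict : ∃ x₀ : X, f₁ x₀ < 0)
    (g : ℝ → EReal)
    (hg : ∀ η, g η = ⨅ x : X, ((f₀ x + η * f₁ x : ℝ) : EReal)) :
    ∃ ηstar : ℝ, 0 ≤ ηstar ∧ ∀ η : ℝ, 0 ≤ η → g η ≤ g ηstar :=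
  dual_optimum_attained_general f₀ f₁ hstrict g hg
end

section
/- Under the assumptions that for each η ≥ 0 the minimizer set X(η) = argmin_x (f₀(x) + η f₁(x)) is nonempty, that f₁ takes a common value f₁(X(η)) on X(η), and that η ↦ f₁(X(η)) is continuous, the following complementary slackness holds at a dual optimal η*: (a) if η* = 0 then f₁(X(η*)) ≤ 0; (b) if η* > 0 then f₁(X(η*)) = 0. -/
open Topology


/-- Complementary slackness at a dual optimum.  Suppose for every
`η ≥ 0` the minimizer set `X(η) = argmin_x (f₀ x + η f₁ x)` is nonempty (witnessed by
a selection `xsel η`), `f₁` takes a common value on `X(η)`, and `η ↦ f₁ (xsel η)` is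
continuous on `[0, ∞)`.  If `η* ≥ 0` maximizes the dual function
`g(η) = f₀ (xsel η) + η f₁ (xsel η)` over `[0, ∞)`, then:
(a) if `η* = 0` then `f₁ (xsel η*) ≤ 0`; (b) if `η* > 0` then `f₁ (xsel η*) = 0`. -/
theorem complementary_slackness
    {X : Type*} (f₀ f₁ : X → ℝ) (xsel : ℝ → X)
    (hmin : ∀ η : ℝ, 0 ≤ η → ∀ x : X,
      f₀ (xsel η) + η * f₁ (xsel η) ≤ f₀ x + η * f₁ x)
    (hwelldef : ∀ η : ℝ, 0 ≤ η → ∀ x : X,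
      (∀ y : X, f₀ x + η * f₁ x ≤ f₀ y + η * f₁ y) → f₁ x = f₁ (xsel η))
    (hcont : ContinuousOn (fun η => f₁ (xsel η)) (Set.Ici (0 : ℝ)))
    (ηstar : ℝ) (hηstar : 0 ≤ ηstar)
    (hopt : ∀ η : ℝ, 0 ≤ η →
      f₀ (xsel η) + η * f₁ (xsel η) ≤ f₀ (xsel ηstar) + ηstar * f₁ (xsel ηstar)) :
    (ηstar = 0 → f₁ (xsel ηstar) ≤ 0) ∧ (0 < ηstar → f₁ (xsel ηstar) = 0) := by
  set φ : ℝ → ℝ := fun η => f₁ (xsel η) with hφ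
  -- key inequality: for all η ≥ 0, (η - η*) * φ η ≤ 0
  have key : ∀ η : ℝ, 0 ≤ η → (η - ηstar) * φ η ≤ 0 := by
    intro η hη
    have h1 : f₀ (xsel ηstar) + ηstar * f₁ (xsel ηstar) ≤
        f₀ (xsel η) + ηstar * f₁ (xsel η) := hmin ηstar hηstar (xsel η)
    have h2 := hopt η hη
    nlinarith [h1, h2]
  -- to the right of ηstar, φ ≤ 0
  have hright : ∀ η : ℝ, ηstar < η → φ η ≤ 0 := by
    intro η hη
    have h0 : 0 ≤ η := le_trans hηstar hη.le
    have := key η h0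
    nlinarith [this]
  -- to the left of ηstar (within [0,∞)), φ ≥ 0
  have hleft : ∀ η : ℝ, 0 ≤ η → η < ηstar → 0 ≤ φ η := by
    intro η h0 hη
    have := key η h0
    nlinarith [this]
  -- φ ηstar ≤ 0, by continuity from the right
  have hle : φ ηstar ≤ 0 := by
    have hne : (𝓝[>] ηstar).NeBot := nhdsGT_neBot ηstar
    have htend : Filter.Tendsto φ (𝓝[>] ηstar) (𝓝 (φ ηstar)) := by
      have h1 : ContinuousWithinAt φ (Set.Ici 0) ηstar :=
        hcont ηstar hηstar
      exact h1.mono_left (nhdsWithin_mono ηstar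
        (fun x hx => le_trans hηstar (le_of_lt hx)))
    refine le_of_tendsto htend ?_
    filter_upwards [self_mem_nhdsWithin] with η hη
    exact hright η hη
  refine ⟨fun _ => hle, fun hpos => ?_⟩
  -- φ ηstar ≥ 0, by continuity from the left
  have hge : 0 ≤ φ ηstar := by
    have hne : (𝓝[Set.Ico 0 ηstar] ηstar).NeBot := by
      rw [← mem_closure_iff_nhdsWithin_neBot, closure_Ico hpos.ne]
      exact ⟨hηstar, le_rfl⟩
    have htend : Filter.Tendsto φ (𝓝[Set.Ico 0 ηstar] ηstar) (𝓝 (φ ηstar)) := by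
      have h1 : ContinuousWithinAt φ (Set.Ici 0) ηstar :=
        hcont ηstar hηstar
      exact h1.mono_left (nhdsWithin_mono ηstar (fun x hx => hx.1))
    refine ge_of_tendsto htend ?_
    filter_upwards [self_mem_nhdsWithin] with η hη
    exact hleft η hη.1 hη.2
  exact le_antisymm hle hge
end

section
/- Under strict feasibility and the continuity/uniqueness assumptions on minimizers, strong duality holds for the nonconvex problem with a single inequality constraint: there exists a finite dual optimal η* ≥ 0, any x* ∈ argmin_x (f₀(x) + η* f₁(x)) is primal feasible (f₁(x*) ≤ 0) and primal optimal, and f₀(x*) = g(η*), i.e., the duality gap is zero. -/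
/-- Strong duality for a nonconvex problem with a single inequality
constraint.  Under strict feasibility (`∃ x₀, f₁ x₀ < 0`) and the assumptions that for
each `η ≥ 0` the argmin set of `f₀ + η f₁` is nonempty (witnessed by a selection
`xsel η`), that `f₁` is constant on each argmin set, and that `η ↦ f₁ (xsel η)` is
continuous on `[0, ∞)`, there exists a finite dual optimal `η* ≥ 0` maximizing the
dual function `g(η) = f₀ (xsel η) + η f₁ (xsel η)` over `[0, ∞)`, and every
`x* ∈ argmin_x (f₀ x + η* f₁ x)` is primal feasible (`f₁ x* ≤ 0`), primal optimal,
and satisfies `f₀ x* = g η*` (zero duality gap). -/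
theorem strong_duality_nonconvex
    {X : Type*} (f₀ f₁ : X → ℝ) (xsel : ℝ → X)
    (hstrict : ∃ x₀ : X, f₁ x₀ < 0)
    (hmin : ∀ η : ℝ, 0 ≤ η → ∀ x : X,
      f₀ (xsel η) + η * f₁ (xsel η) ≤ f₀ x + η * f₁ x)
    (hwelldef : ∀ η : ℝ, 0 ≤ η → ∀ x : X,
      (∀ y : X, f₀ x + η * f₁ x ≤ f₀ y + η * f₁ y) → f₁ x = f₁ (xsel η))
    (hcont : ContinuousOn (fun η => f₁ (xsel η)) (Set.Ici (0 : ℝ))) :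
    ∃ ηstar : ℝ, 0 ≤ ηstar ∧
      (∀ η : ℝ, 0 ≤ η →
        f₀ (xsel η) + η * f₁ (xsel η) ≤ f₀ (xsel ηstar) + ηstar * f₁ (xsel ηstar)) ∧
      ∀ xstar : X,
        (∀ y : X, f₀ xstar + ηstar * f₁ xstar ≤ f₀ y + ηstar * f₁ y) →
          f₁ xstar ≤ 0 ∧
          (∀ y : X, f₁ y ≤ 0 → f₀ xstar ≤ f₀ y) ∧
          f₀ xstar = f₀ (xsel ηstar) + ηstar * f₁ (xsel ηstar) := by
  obtain ⟨x₀, hx₀⟩ := hstrict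
  by_cases h0 : f₁ (xsel 0) ≤ 0
  · refine ⟨0, le_rfl, ?_, ?_⟩
    · intro η hη
      have h1 := hmin η hη (xsel 0)
      have h2 : η * f₁ (xsel 0) ≤ 0 := mul_nonpos_of_nonneg_of_nonpos hη h0
      nlinarith
    · intro xstar hx
      have hf := hwelldef 0 le_rfl xstar hx
      refine ⟨by rw [hf]; exact h0, ?_, ?_⟩
      · intro y _
        have := hx y; nlinarith
      · have h1 := hx (xsel 0)
        have h2 := hmin 0 le_rfl xstar
        nlinarith
  · push_neg at h0
    set φ : ℝ → ℝ := fun η => f₁ (xsel η) with hφ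
    have hA : ∀ η : ℝ, 0 ≤ η → η * φ η ≤ η * f₁ x₀ + (f₀ x₀ - f₀ (xsel 0)) := by
      intro η hη
      have h1 := hmin η hη x₀
      have h2 := hmin 0 le_rfl (xsel η)
      simp only [hφ]
      nlinarith
    obtain ⟨η₁, hη₁pos, hη₁neg⟩ : ∃ η₁ : ℝ, 0 < η₁ ∧ φ η₁ < 0 := by
      set c := f₀ x₀ - f₀ (xsel 0) with hc
      refine ⟨max 1 ((c + 1) / (-f₁ x₀)), lt_of_lt_of_le zero_lt_one (le_max_left _ _), ?_⟩
      set η₁ := max 1 ((c + 1) / (-f₁ x₀)) with hη₁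
      have hpos : (0:ℝ) < η₁ := lt_of_lt_of_le zero_lt_one (le_max_left _ _)
      have hge : (c + 1) / (-f₁ x₀) ≤ η₁ := le_max_right _ _
      have hneg : (0:ℝ) < -f₁ x₀ := by linarith
      have h3 : c + 1 ≤ η₁ * (-f₁ x₀) := by
        rw [div_le_iff₀ hneg] at hge; linarith
      have h4 := hA η₁ hpos.le
      have h5 : η₁ * φ η₁ ≤ -1 := by nlinarith
      nlinarith
    have hsub : Set.Icc (0:ℝ) η₁ ⊆ Set.Ici (0:ℝ) := fun x hx => hx.1
    have hivt := intermediate_value_Icc' hη₁pos.le (hcont.mono hsub)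
    have h0mem : (0:ℝ) ∈ Set.Icc (φ η₁) (φ 0) := ⟨hη₁neg.le, h0.le⟩
    obtain ⟨ηs, hηsmem, hηs0⟩ := hivt h0mem
    have hηsnn : 0 ≤ ηs := hηsmem.1
    have hφ0 : f₁ (xsel ηs) = 0 := hηs0
    refine ⟨ηs, hηsnn, ?_, ?_⟩
    · intro η hη
      have h1 := hmin η hη (xsel ηs)
      rw [hφ0] at h1 ⊢
      nlinarith
    · intro xstar hx
      have hf : f₁ xstar = 0 := by rw [hwelldef ηs hηsnn xstar hx]; exact hφ0
      refine ⟨hf.le, ?_, ?_⟩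
      · intro y hy
        have h1 := hx y
        rw [hf] at h1
        nlinarith [mul_nonpos_of_nonneg_of_nonpos hηsnn hy]
      · have h1 := hx (xsel ηs)
        have h2 := hmin ηs hηsnn xstar
        rw [hf] at h1 h2
        nlinarith [hφ0]
end

section
/- Legendre duality between KL divergence and free energy: for a probability measure P on a measurable space X, a bounded measurable cost C : X → ℝ, and λ > 0, the free energy F(P,C) := -λ log ∫ exp(-C(x)/λ) dP(x) satisfies F(P,C) = inf_Q { ∫ C dQ + λ D(Q‖P) }, where the infimum is over probability measures Q absolutely continuous with respect to P, and D(Q‖P) = ∫ log(dQ/dP) dQ is the KL divergence. Moreover the infimum is attained by the Gibbs measure Q*(B) = ∫_B exp(-C/λ) dP / ∫_X exp(-C/λ) dP. -/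
/-!
Tilting `P` by `f = -C/λ` gives the Gibbs measure `Q* = P.tilted f`, and for every `Q ≪ P`
the change-of-reference identity `D(Q‖Q*) = D(Q‖P) - ∫ f dQ + log Z` holds. Gibbs'
inequality `D(Q‖Q*) ≥ 0` is then the lower bound (the Donsker–Varadhan inequality), and
`log (dQ*/dP) = f - log Z` makes it an equality at `Q = Q*`.
-/

open MeasureTheory Real

section DonskerVaradhan

variable {X : Type*} [MeasurableSpace X] {μ ν : Measure X} {f : X → ℝ}

lemma integral_llr_nonneg [IsProbabilityMeasure μ] [IsProbabilityMeasure ν] (hμν : μ ≪ ν)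
    (h_int : Integrable (llr μ ν) μ) : 0 ≤ ∫ x, llr μ ν x ∂μ := by
  simpa using InformationTheory.integral_llr_add_sub_measure_univ_nonneg hμν h_int

lemma integral_sub_integral_llr_le_log_integral_exp [IsProbabilityMeasure μ]
    [IsProbabilityMeasure ν] (hμν : μ ≪ ν) (hfμ : Integrable f μ)
    (hfν : Integrable (fun x ↦ exp (f x)) ν) (h_int : Integrable (llr μ ν) μ) :
    ∫ x, f x ∂μ - ∫ x, llr μ ν x ∂μ ≤ log (∫ x, exp (f x) ∂ν) := by
  have : IsProbabilityMeasure (ν.tilted f) := isProbabilityMeasure_tilted hfν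
  have h_gibbs := integral_llr_nonneg (hμν.trans (absolutelyContinuous_tilted hfν))
    (integrable_llr_tilted_right hμν hfμ h_int hfν)
  rw [integral_llr_tilted_right hμν hfμ hfν h_int] at h_gibbs
  linarith

lemma integral_llr_tilted_self [IsProbabilityMeasure ν] (hfν : Integrable (fun x ↦ exp (f x)) ν)
    (hf : AEMeasurable f ν) (hf_int : Integrable f (ν.tilted f)) :
    ∫ x, llr (ν.tilted f) ν x ∂(ν.tilted f) = ∫ x, f x ∂(ν.tilted f) - log (∫ x, exp (f x) ∂ν) := by
  have : IsProbabilityMeasure (ν.tilted f) := isProbabilityMeasure_tilted hfν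
  have h_llr : llr (ν.tilted f) ν =ᵐ[ν] fun x ↦ f x - log (∫ z, exp (f z) ∂ν) := by
    filter_upwards [llr_tilted_left .rfl hfν hf, llr_self ν] with x hx hx_self
    simp [hx, hx_self]
  rw [integral_congr_ae ((tilted_absolutelyContinuous ν f).ae_le h_llr),
    integral_sub hf_int (integrable_const _)]
  simp

end DonskerVaradhan

/-- Legendre duality between KL divergence and free energy: for a
probability measure `P`, bounded measurable cost `C`, and `λ > 0`, the free energy
`F = -λ log ∫ exp(-C/λ) dP` is a lower bound for `∫ C dQ + λ D(Q‖P)` over all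
probability measures `Q ≪ P` (with finite KL divergence `D(Q‖P) = ∫ log(dQ/dP) dQ`),
and the infimum is attained by the Gibbs measure
`Q*(B) = ∫_B exp(-C/λ) dP / ∫ exp(-C/λ) dP`. -/
theorem legendre_duality_kl_free_energy
    {X : Type*} [MeasurableSpace X] (P : Measure X) [IsProbabilityMeasure P]
    (C : X → ℝ) (hCmeas : Measurable C) (hCbdd : ∃ M : ℝ, ∀ x, |C x| ≤ M)
    (lam : ℝ) (hlam : 0 < lam)
    (Z : ℝ) (hZ : Z = ∫ x, Real.exp (-C x / lam) ∂P)
    (F : ℝ) (hF : F = -lam * Real.log Z)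
    (Qstar : Measure X)
    (hQstar : Qstar = P.withDensity fun x => ENNReal.ofReal (Real.exp (-C x / lam) / Z)) :
    (∀ Q : Measure X, IsProbabilityMeasure Q → Q ≪ P → Integrable (llr Q P) Q →
        F ≤ ∫ x, C x ∂Q + lam * ∫ x, llr Q P x ∂Q) ∧
    IsProbabilityMeasure Qstar ∧ Qstar ≪ P ∧
    F = ∫ x, C x ∂Qstar + lam * ∫ x, llr Qstar P x ∂Qstar ∧
    ∀ B : Set X, MeasurableSet B →
      Qstar B = ENNReal.ofReal ((∫ x in B, Real.exp (-C x / lam) ∂P) / Z) := by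
  obtain ⟨M, hM⟩ := hCbdd
  set f : X → ℝ := fun x ↦ -C x / lam
  have hf_meas : Measurable f := hCmeas.neg.div_const lam
  have hf_int (μ : Measure X) [IsFiniteMeasure μ] : Integrable f μ :=
    (Integrable.of_bound hCmeas.aestronglyMeasurable M (ae_of_all _ hM)).neg.div_const lam
  have hf_integral (μ : Measure X) : ∫ x, f x ∂μ = -(∫ x, C x ∂μ) / lam := by
    simp only [f, integral_div, integral_neg]
  have hexp_int : Integrable (fun x ↦ exp (f x)) P := by
    refine Integrable.of_bound hf_meas.exp.aestronglyMeasurable (exp (M / lam)) (ae_of_all _ ?_)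
    intro x
    rw [norm_of_nonneg (exp_pos _).le, exp_le_exp]
    exact div_le_div_of_nonneg_right (neg_le.mpr (abs_le.mp (hM x)).1) hlam.le
  have hQstar_tilted : Qstar = P.tilted f := by rw [hQstar, hZ]; rfl
  have : IsProbabilityMeasure (P.tilted f) := isProbabilityMeasure_tilted hexp_int
  subst hQstar_tilted hF
  refine ⟨fun Q _ hQP h_int ↦ ?_, inferInstance, tilted_absolutelyContinuous P f, ?_,
    fun B _ ↦ ?_⟩
  · have h := integral_sub_integral_llr_le_log_integral_exp hQP (hf_int Q) hexp_int h_int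
    rw [hf_integral, ← hZ] at h
    have h_scaled := mul_le_mul_of_nonneg_left h hlam.le
    rw [mul_sub, mul_div_cancel₀ _ hlam.ne'] at h_scaled
    linarith
  · rw [integral_llr_tilted_self hexp_int hf_meas.aemeasurable (hf_int _), hf_integral, ← hZ]
    field_simp
    ring
  · rw [tilted_apply_eq_ofReal_integral, integral_div, hZ]
end

section
/- Path integral representation of the KL-control value function: under deterministic dynamics, the exponentiated value function Z_t(x) := exp(-J_t(x)/λ) satisfies the linear backward recursion Z_t(x_t) = ∫_{U_t} exp(-C_t(x_t,u_t)/λ) Z_{t+1}(F_t(x_t,u_t)) R(du_t|x_t), and by recursive substitution J_t(x_t) = -λ log E_R[ exp( -(1/λ) C_{t:T}(X_{t:T}, U_{t:T-1}) ) ], where the expectation is over trajectories generated from x_t under the reference policy R and C_{t:T} = Σ_{k=t}^{T-1} C_k(x_k,u_k) + C_T(x_T). -/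
/-! Unfolding the Bellman recursion gives `exp (-J_{k+1}/λ) = exp (log I)` for the one-step
integral `I`, so the linear recursion for `Z = exp (-J/λ)` holds once `I > 0`, which follows from
`J` being bounded and measurable (induction on the horizon). The reference trajectory measure is
built by the same recursion, prepending one control at a time, so the lower integral of
`exp (-C_{t:T}/λ)` splits into the one-step integral of `exp (-C_t/λ)` times the same quantity
one step later; by induction and the linear recursion it equals `Z_t`. -/

open MeasureTheory

section PathIntegral

variable {X U : Type*} [MeasurableSpace X] [MeasurableSpace U]

/-- The KL-control value function `J`, defined by the nonlinear Bellman recursion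
`J_t(x) = -λ log ∫ exp(-(C_t(x,u) + J_{t+1}(F_t(x,u)))/λ) R(du|x)` with terminal
condition `C_T`.  It is indexed by the number `k` of remaining steps and the
current time `t` (so `J_t` of the paper, `t = T - k`, is `klValue … k t`). -/
noncomputable def klValue (C : ℕ → X → U → ℝ) (CT : X → ℝ) (F : ℕ → X → U → X)
    (R : ℕ → X → Measure U) (lam : ℝ) : ℕ → ℕ → X → ℝ
  | 0, _, x => CT x
  | k + 1, t, x =>
      -lam * Real.log (∫ u,
        Real.exp (-(C t x u + klValue C CT F R lam k (t + 1) (F t x u)) / lam) ∂(R t x))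

/-- The reference trajectory measure on control sequences of length `k` generated
from state `x` at time `t` by the reference policy `R` and the deterministic
dynamics `F`. -/
noncomputable def refTraj (F : ℕ → X → U → X) (R : ℕ → X → Measure U) :
    (k : ℕ) → ℕ → X → Measure (Fin k → U)
  | 0, _, _ => Measure.dirac fun i => i.elim0
  | k + 1, t, x =>
      (R t x).bind fun u => (refTraj F R k (t + 1) (F t x u)).map (Fin.cons u)

/-- The path cost `C_{t:T} = Σ_{k=t}^{T-1} C_k(x_k,u_k) + C_T(x_T)` of a control
sequence of length `k` applied from state `x` at time `t` under dynamics `F`. -/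
def pathCost (C : ℕ → X → U → ℝ) (CT : X → ℝ) (F : ℕ → X → U → X) :
    (k : ℕ) → ℕ → X → (Fin k → U) → ℝ
  | 0, _, x, _ => CT x
  | k + 1, t, x, us =>
      C t x (us 0) + pathCost C CT F k (t + 1) (F t x (us 0)) fun i => us i.succ

open ProbabilityTheory

section General

variable {W V : Type*} [MeasurableSpace W] [MeasurableSpace V]

theorem measurable_finCons {k : ℕ} :
    Measurable fun p : U × (Fin k → U) => (Fin.cons p.1 p.2 : Fin (k + 1) → U) := by
  refine measurable_pi_iff.2 fun i => ?_
  cases i using Fin.cases <;> simp only [Fin.cons_zero, Fin.cons_succ] <;> fun_prop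

theorem ProbabilityTheory.Kernel.measurable_map_section (η : Kernel U W) [IsSFiniteKernel η]
    {g : U × W → V} (hg : Measurable g) :
    Measurable fun u => (η u).map fun w => g (u, w) := by
  convert ((Kernel.id ×ₖ η).map g).measurable using 1
  ext1 u
  rw [Kernel.map_apply _ hg, Kernel.prod_apply, Kernel.id_apply, Measure.dirac_prod,
    Measure.map_map hg measurable_prodMk_left]
  rfl

theorem ProbabilityTheory.Kernel.map_compProd_apply (κ : Kernel X U) [IsSFiniteKernel κ]
    (η : Kernel (X × U) W) [IsSFiniteKernel η] {g : U × W → V} (hg : Measurable g) (x : X) :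
    (κ ⊗ₖ η).map g x = (κ x).bind fun u => (η (x, u)).map fun w => g (u, w) := by
  ext s hs
  have hsection : Measurable fun u => (η (x, u)).map fun w => g (u, w) :=
    (η.comap (Prod.mk x) measurable_prodMk_left).measurable_map_section hg
  rw [Kernel.map_apply' _ hg _ hs, Kernel.compProd_apply (hg hs),
    Measure.bind_apply hs hsection.aemeasurable]
  exact lintegral_congr fun u => (Measure.map_apply (hg.comp measurable_prodMk_left) hs).symm

variable {μ : Measure X} {Y : X → ℝ} {B : ℝ}

theorem abs_neg_div_le_of_abs_le {y : ℝ} (hy : |y| ≤ B) (lam : ℝ) : |-y / lam| ≤ B / |lam| := by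
  rw [abs_div, abs_neg]
  exact div_le_div_of_nonneg_right hy (abs_nonneg lam)

theorem integrable_exp_neg_div_of_abs_le [IsFiniteMeasure μ] (hY : Measurable Y)
    (hB : ∀ x, |Y x| ≤ B) (lam : ℝ) : Integrable (fun x => Real.exp (-Y x / lam)) μ := by
  refine .of_bound (hY.neg.div_const lam).exp.aestronglyMeasurable (Real.exp (B / |lam|))
    (.of_forall fun x => ?_)
  rw [Real.norm_eq_abs, Real.abs_exp, Real.exp_le_exp]
  exact (le_abs_self _).trans (abs_neg_div_le_of_abs_le (hB x) lam)

theorem abs_neg_mul_log_integral_exp_neg_div_le [IsProbabilityMeasure μ] {lam : ℝ}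
    (hlam : lam ≠ 0) (hY : Measurable Y) (hB : ∀ x, |Y x| ≤ B) :
    |-lam * Real.log (∫ x, Real.exp (-Y x / lam) ∂μ)| ≤ B := by
  have hint := integrable_exp_neg_div_of_abs_le (μ := μ) hY hB lam
  have hexp (x : X) := abs_le.1 (abs_neg_div_le_of_abs_le (hB x) lam)
  have hlow : Real.exp (-(B / |lam|)) ≤ ∫ x, Real.exp (-Y x / lam) ∂μ := by
    simpa using integral_mono (integrable_const _) hint fun x => Real.exp_le_exp.2 (hexp x).1
  have hup : ∫ x, Real.exp (-Y x / lam) ∂μ ≤ Real.exp (B / |lam|) := by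
    simpa using integral_mono hint (integrable_const _) fun x => Real.exp_le_exp.2 (hexp x).2
  have hpos := (Real.exp_pos _).trans_le hlow
  have hlog : |Real.log (∫ x, Real.exp (-Y x / lam) ∂μ)| ≤ B / |lam| :=
    abs_le.2 ⟨(Real.le_log_iff_exp_le hpos).2 hlow, (Real.log_le_iff_le_exp hpos).2 hup⟩
  rwa [abs_mul, abs_neg, ← le_div_iff₀' (abs_pos.2 hlam)]

end General

section KLControl

variable {C : ℕ → X → U → ℝ} {CT : X → ℝ} {F : ℕ → X → U → X} {R : ℕ → X → Measure U}
  {lam : ℝ}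

theorem measurable_klValue (lam : ℝ) (hRprob : ∀ t x, IsProbabilityMeasure (R t x))
    (hRmeas : ∀ t, Measurable (R t)) (hFmeas : ∀ t, Measurable (Function.uncurry (F t)))
    (hCmeas : ∀ t, Measurable (Function.uncurry (C t))) (hCTmeas : Measurable CT) :
    ∀ k t, Measurable (klValue C CT F R lam k t)
  | 0, _ => hCTmeas
  | k + 1, t => by
    let κ : Kernel X U := ⟨R t, hRmeas t⟩
    have : IsMarkovKernel κ := ⟨hRprob t⟩
    have hexp : Measurable fun p : X × U =>
        Real.exp (-(C t p.1 p.2 + klValue C CT F R lam k (t + 1) (F t p.1 p.2)) / lam) :=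
      (((hCmeas t).add ((measurable_klValue lam hRprob hRmeas hFmeas hCmeas hCTmeas k
        (t + 1)).comp (hFmeas t))).neg.div_const lam).exp
    exact (hexp.stronglyMeasurable.integral_kernel_prod_right' (κ := κ)).measurable.log.const_mul _

theorem measurable_cost_add_klValue (hJ : ∀ k t, Measurable (klValue C CT F R lam k t))
    (hFmeas : ∀ t, Measurable (Function.uncurry (F t)))
    (hCmeas : ∀ t, Measurable (Function.uncurry (C t))) (k t : ℕ) (x : X) :
    Measurable fun u => C t x u + klValue C CT F R lam k (t + 1) (F t x u) :=
  ((hCmeas t).comp measurable_prodMk_left).add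
    ((hJ k (t + 1)).comp ((hFmeas t).comp measurable_prodMk_left))

theorem abs_klValue_le (hlam : lam ≠ 0) (hRprob : ∀ t x, IsProbabilityMeasure (R t x))
    (hJ : ∀ k t, Measurable (klValue C CT F R lam k t))
    (hFmeas : ∀ t, Measurable (Function.uncurry (F t)))
    (hCmeas : ∀ t, Measurable (Function.uncurry (C t))) {MC MCT : ℝ}
    (hC : ∀ t x u, |C t x u| ≤ MC) (hCT : ∀ x, |CT x| ≤ MCT) :
    ∀ k t x, |klValue C CT F R lam k t x| ≤ MCT + k * MC
  | 0, _, x => by simpa [klValue] using hCT x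
  | k + 1, t, x => by
    have hB (u : U) : |C t x u + klValue C CT F R lam k (t + 1) (F t x u)| ≤ MC + (MCT + k * MC) :=
      (abs_add_le _ _).trans
        (add_le_add (hC t x u) (abs_klValue_le hlam hRprob hJ hFmeas hCmeas hC hCT k _ _))
    calc |klValue C CT F R lam (k + 1) t x| ≤ MC + (MCT + k * MC) :=
          abs_neg_mul_log_integral_exp_neg_div_le hlam
            (measurable_cost_add_klValue hJ hFmeas hCmeas k t x) hB
      _ = MCT + (k + 1 : ℕ) * MC := by push_cast; ring

theorem integrable_exp_neg_cost_add_klValue_div (hlam : lam ≠ 0)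
    (hRprob : ∀ t x, IsProbabilityMeasure (R t x))
    (hJ : ∀ k t, Measurable (klValue C CT F R lam k t))
    (hFmeas : ∀ t, Measurable (Function.uncurry (F t)))
    (hCmeas : ∀ t, Measurable (Function.uncurry (C t))) {MC MCT : ℝ}
    (hC : ∀ t x u, |C t x u| ≤ MC) (hCT : ∀ x, |CT x| ≤ MCT) (k t : ℕ) (x : X) :
    Integrable (fun u => Real.exp (-(C t x u + klValue C CT F R lam k (t + 1) (F t x u)) / lam))
      (R t x) :=
  integrable_exp_neg_div_of_abs_le (measurable_cost_add_klValue hJ hFmeas hCmeas k t x)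
    (fun u => (abs_add_le _ _).trans
      (add_le_add (hC t x u) (abs_klValue_le hlam hRprob hJ hFmeas hCmeas hC hCT k _ _))) lam

omit [MeasurableSpace X] in
theorem exp_neg_klValue_succ_div (hlam : lam ≠ 0) {k t : ℕ} {x : X} [NeZero (R t x)]
    (hint : Integrable
      (fun u => Real.exp (-(C t x u + klValue C CT F R lam k (t + 1) (F t x u)) / lam)) (R t x)) :
    Real.exp (-klValue C CT F R lam (k + 1) t x / lam) =
      ∫ u, Real.exp (-(C t x u + klValue C CT F R lam k (t + 1) (F t x u)) / lam) ∂(R t x) := by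
  rw [klValue, neg_mul, neg_neg, mul_div_cancel_left₀ _ hlam, Real.exp_log]
  simpa only [neg_div] using integral_exp_pos (by simpa only [neg_div] using hint)

theorem exists_isMarkovKernel_coe_eq_refTraj (hRprob : ∀ t x, IsProbabilityMeasure (R t x))
    (hRmeas : ∀ t, Measurable (R t)) (hFmeas : ∀ t, Measurable (Function.uncurry (F t))) :
    ∀ k t, ∃ κ : Kernel X (Fin k → U), IsMarkovKernel κ ∧ ⇑κ = refTraj F R k t
  | 0, _ => ⟨Kernel.const X (Measure.dirac fun i => i.elim0), inferInstance, rfl⟩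
  | k + 1, t => by
    obtain ⟨ρ, hρ, hρ_eq⟩ := exists_isMarkovKernel_coe_eq_refTraj hRprob hRmeas hFmeas k (t + 1)
    let κ : Kernel X U := ⟨R t, hRmeas t⟩
    have : IsMarkovKernel κ := ⟨hRprob t⟩
    refine ⟨(κ ⊗ₖ ρ.comap (Function.uncurry (F t)) (hFmeas t)).map fun p => Fin.cons p.1 p.2,
      Kernel.IsMarkovKernel.map _ measurable_finCons, funext fun x => ?_⟩
    rw [Kernel.map_compProd_apply _ _ measurable_finCons, refTraj, ← hρ_eq]
    rfl

theorem measurable_pathCost (hFmeas : ∀ t, Measurable (Function.uncurry (F t)))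
    (hCmeas : ∀ t, Measurable (Function.uncurry (C t))) (hCTmeas : Measurable CT) :
    ∀ k t, Measurable (Function.uncurry (pathCost C CT F k t))
  | 0, _ => hCTmeas.comp measurable_fst
  | k + 1, t => by
    have hhead : Measurable fun p : X × (Fin (k + 1) → U) => (p.1, p.2 0) := by fun_prop
    have htail : Measurable fun p : X × (Fin (k + 1) → U) =>
        (F t p.1 (p.2 0), fun i : Fin k => p.2 i.succ) :=
      ((hFmeas t).comp hhead).prodMk (by fun_prop)
    exact ((hCmeas t).comp hhead).add
      ((measurable_pathCost hFmeas hCmeas hCTmeas k (t + 1)).comp htail)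

theorem measurable_exp_neg_pathCost_div (hFmeas : ∀ t, Measurable (Function.uncurry (F t)))
    (hCmeas : ∀ t, Measurable (Function.uncurry (C t))) (hCTmeas : Measurable CT) (lam : ℝ)
    (k t : ℕ) (x : X) : Measurable fun us => Real.exp (-pathCost C CT F k t x us / lam) :=
  (((measurable_pathCost hFmeas hCmeas hCTmeas k t).comp measurable_prodMk_left).neg.div_const
    lam).exp

theorem lintegral_exp_neg_pathCost_div (hlam : lam ≠ 0)
    (hRprob : ∀ t x, IsProbabilityMeasure (R t x)) (hRmeas : ∀ t, Measurable (R t))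
    (hFmeas : ∀ t, Measurable (Function.uncurry (F t)))
    (hCmeas : ∀ t, Measurable (Function.uncurry (C t))) (hCTmeas : Measurable CT)
    (hint : ∀ k t x, Integrable
      (fun u => Real.exp (-(C t x u + klValue C CT F R lam k (t + 1) (F t x u)) / lam)) (R t x)) :
    ∀ k t x, ∫⁻ us, ENNReal.ofReal (Real.exp (-pathCost C CT F k t x us / lam))
        ∂(refTraj F R k t x) = ENNReal.ofReal (Real.exp (-klValue C CT F R lam k t x / lam))
  | 0, t, x => by simp [refTraj, pathCost, klValue]
  | k + 1, t, x => by
    have hf :=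
      (measurable_exp_neg_pathCost_div hFmeas hCmeas hCTmeas lam (k + 1) t x).ennreal_ofReal
    have hsplit (a b : ℝ) : ENNReal.ofReal (Real.exp (-(a + b) / lam)) =
        ENNReal.ofReal (Real.exp (-a / lam)) * ENNReal.ofReal (Real.exp (-b / lam)) := by
      rw [← ENNReal.ofReal_mul (Real.exp_pos _).le, ← Real.exp_add, neg_add, add_div]
    obtain ⟨ρ, _, hρ⟩ := exists_isMarkovKernel_coe_eq_refTraj hRprob hRmeas hFmeas k (t + 1)
    have hcons (u : U) : Measurable (Fin.cons (n := k) (α := fun _ => U) u) :=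
      measurable_finCons.comp measurable_prodMk_left
    have hsection : Measurable fun u => (refTraj F R k (t + 1) (F t x u)).map
        (Fin.cons (α := fun _ => U) u) := by
      rw [← hρ]
      have hFx : Measurable (F t x) := (hFmeas t).comp measurable_prodMk_left
      exact (ρ.comap (F t x) hFx).measurable_map_section measurable_finCons
    have hstep (u : U) :
        ∫⁻ us, ENNReal.ofReal (Real.exp (-pathCost C CT F (k + 1) t x us / lam))
          ∂(refTraj F R k (t + 1) (F t x u)).map (Fin.cons (α := fun _ => U) u) =
        ENNReal.ofReal
          (Real.exp (-(C t x u + klValue C CT F R lam k (t + 1) (F t x u)) / lam)) := by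
      rw [lintegral_map hf (hcons u)]
      simp only [pathCost, Fin.cons_zero, Fin.cons_succ, hsplit]
      rw [lintegral_const_mul' _ _ ENNReal.ofReal_ne_top,
        lintegral_exp_neg_pathCost_div hlam hRprob hRmeas hFmeas hCmeas hCTmeas hint k]
    rw [refTraj, Measure.lintegral_bind hsection.aemeasurable hf.aemeasurable]
    simp only [hstep]
    rw [← ofReal_integral_eq_lintegral_ofReal (hint k t x)
      (.of_forall fun _ => (Real.exp_pos _).le), exp_neg_klValue_succ_div hlam (hint k t x)]

theorem integral_exp_neg_pathCost_div (hlam : lam ≠ 0)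
    (hRprob : ∀ t x, IsProbabilityMeasure (R t x)) (hRmeas : ∀ t, Measurable (R t))
    (hFmeas : ∀ t, Measurable (Function.uncurry (F t)))
    (hCmeas : ∀ t, Measurable (Function.uncurry (C t))) (hCTmeas : Measurable CT)
    (hint : ∀ k t x, Integrable
      (fun u => Real.exp (-(C t x u + klValue C CT F R lam k (t + 1) (F t x u)) / lam)) (R t x))
    (k t : ℕ) (x : X) :
    ∫ us, Real.exp (-pathCost C CT F k t x us / lam) ∂(refTraj F R k t x) =
      Real.exp (-klValue C CT F R lam k t x / lam) := by
  rw [integral_eq_lintegral_of_nonneg_ae (.of_forall fun _ => (Real.exp_pos _).le)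
    (measurable_exp_neg_pathCost_div hFmeas hCmeas hCTmeas lam k t x).aestronglyMeasurable,
    lintegral_exp_neg_pathCost_div hlam hRprob hRmeas hFmeas hCmeas hCTmeas hint,
    ENNReal.toReal_ofReal (Real.exp_pos _).le]

end KLControl

/-- Path integral representation of the KL-control value function:
under deterministic dynamics, the exponentiated value function
`Z_t(x) = exp(-J_t(x)/λ)` satisfies the linear backward recursion
`Z_t(x) = ∫ exp(-C_t(x,u)/λ) Z_{t+1}(F_t(x,u)) R(du|x)`, and by recursive
substitution `J_t(x) = -λ log E_R[exp(-(1/λ) C_{t:T})]`, the expectation being over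
reference trajectories from `(x, t)`. -/
theorem klValue_path_integral_representation
    (C : ℕ → X → U → ℝ) (CT : X → ℝ) (F : ℕ → X → U → X)
    (R : ℕ → X → Measure U) (lam : ℝ) (hlam : 0 < lam)
    (hRprob : ∀ t x, IsProbabilityMeasure (R t x))
    (hRmeas : ∀ t, Measurable (R t))
    (hFmeas : ∀ t, Measurable (Function.uncurry (F t)))
    (hCmeas : ∀ t, Measurable (Function.uncurry (C t)))
    (hCTmeas : Measurable CT)
    (hCbdd : ∃ M : ℝ, ∀ t x u, |C t x u| ≤ M)
    (hCTbdd : ∃ M : ℝ, ∀ x, |CT x| ≤ M) :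
    (∀ (k t : ℕ) (x : X),
      Real.exp (-(klValue C CT F R lam (k + 1) t x) / lam) =
        ∫ u, Real.exp (-(C t x u) / lam) *
          Real.exp (-(klValue C CT F R lam k (t + 1) (F t x u)) / lam) ∂(R t x)) ∧
    (∀ (k t : ℕ) (x : X),
      klValue C CT F R lam k t x =
        -lam * Real.log (∫ us,
          Real.exp (-(pathCost C CT F k t x us) / lam) ∂(refTraj F R k t x))) := by
  obtain ⟨MC, hC⟩ := hCbdd
  obtain ⟨MCT, hCT⟩ := hCTbdd
  have hJ := measurable_klValue lam hRprob hRmeas hFmeas hCmeas hCTmeas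
  have hint := integrable_exp_neg_cost_add_klValue_div hlam.ne' hRprob hJ hFmeas hCmeas hC hCT
  refine ⟨fun k t x => ?_, fun k t x => ?_⟩
  · simp only [← Real.exp_add, ← add_div, ← neg_add]
    exact exp_neg_klValue_succ_div hlam.ne' (hint k t x)
  · rw [integral_exp_neg_pathCost_div hlam.ne' hRprob hRmeas hFmeas hCmeas hCTmeas hint,
      Real.log_exp]
    field_simp

end PathIntegral
end
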